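/- Let n be a positive integer and let λ be a partition with at most 2n parts whose Young diagram can be tiled by dominoes, padded with zeros so that λ_1, …, λ_{2n} are defined. Then b(λ) = Σ_{1≤i≤2n, λ_i−i even} (λ_i − i) + Σ_{1≤i<j≤2n} (−1)^{λ_i − λ_j + j − i}(λ_j − j). -/

import Mathlib

/-- A partition `λ`, 1-indexed: `λ_i = part i` for `i ≥ 1`. -/
structure OneIdxPartition where
  part : ℕ → ℕ
  part_zero : part 0 = 0
  antitone : ∀ ⦃i j : ℕ⦄, 1 ≤ i → i ≤ j → part j ≤ part i
  finite : ∃ N : ℕ, ∀ i : ℕ, N ≤ i → part i = 0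

/-- The conjugate partition: `λ'_j = #{i ≥ 1 : λ_i ≥ j}`. -/
noncomputable def conjFn (f : ℕ → ℕ) (j : ℕ) : ℕ :=
  Set.ncard {i : ℕ | 1 ≤ i ∧ j ≤ f i}

/-- The cells of the Young diagram of `λ`. -/
def cellsFn (f : ℕ → ℕ) : Set (ℕ × ℕ) :=
  {p : ℕ × ℕ | 1 ≤ p.1 ∧ 1 ≤ p.2 ∧ p.2 ≤ f p.1}

/-- The hook length of the cell `(i,j)`: `h(i,j) = (λ_i − j) + (λ'_j − i) + 1`. -/
noncomputable def hookFn (f : ℕ → ℕ) (i j : ℕ) : ℕ :=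
  (f i - j) + (conjFn f j - i) + 1

/-- `b(λ) = Σ_{(i,j)∈λ} (−1)^{λ_i + λ'_j − i − j + 1}(λ_i − i)`;
the exponent is replaced by `λ_i + λ'_j + i + j + 1`, which has the same parity. -/
noncomputable def bFn (f : ℕ → ℕ) : ℤ :=
  ∑ᶠ i : ℕ, ∑ j ∈ Finset.Icc 1 (f i),
    (-1 : ℤ) ^ (f i + conjFn f j + i + j + 1) * ((f i : ℤ) - (i : ℤ))

/-- The size `|λ| = Σ_i λ_i`. -/
noncomputable def sizeFn (f : ℕ → ℕ) : ℕ := ∑ᶠ i : ℕ, f i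

/-- A domino: a pair of horizontally or vertically adjacent cells. -/
def IsDomino (d : Set (ℕ × ℕ)) : Prop :=
  ∃ i j : ℕ, d = {(i, j), (i, j + 1)} ∨ d = {(i, j), (i + 1, j)}

/-- The Young diagram of `λ` can be tiled by dominoes. -/
def HasDominoTiling (f : ℕ → ℕ) : Prop :=
  ∃ D : Set (Set (ℕ × ℕ)), (∀ d ∈ D, IsDomino d) ∧
    D.PairwiseDisjoint id ∧ ⋃₀ D = cellsFn f

/-! Write `ε_i = (-1)^(λ_i + i)` and `a_i = λ_i - i`. On the columns `λ_{k+1} < j ≤ λ_k` the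
conjugate `λ'_j` equals `k`, so twice the alternating sum of `(-1)^(λ'_j + j)` along row `i`
telescopes to `ε_i - 1 + 2 Σ_{k > i} ε_k`, the `(2n+1)`-st row being empty with sign `-1`. Hence
`2 b(λ) = Σ_i (ε_i - 1) a_i - 2 Σ_{i<k} ε_i ε_k a_i`. Every domino covers one cell of each colour
of the checkerboard `(-1)^(i+j)`, which forces `Σ_i ε_i = 0`; expanding
`(Σ_i ε_i) (Σ_k ε_k a_k) = 0` then trades `Σ_{i<k} ε_i ε_k a_i` for
`-Σ_i a_i - Σ_{i<k} ε_i ε_k a_k`, which is the claim. -/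

open Finset

section Alternating

variable {R : Type*} [CommRing R]

lemma two_mul_sum_Ioc_neg_one_pow {a b : ℕ} (hab : a ≤ b) :
    2 * ∑ j ∈ Ioc a b, (-1 : R) ^ j = (-1) ^ b - (-1) ^ a := by
  induction b, hab using Nat.le_induction with
  | base => simp
  | succ b hab ih =>
    rw [sum_Ioc_succ_top hab, mul_add, ih, pow_succ]
    ring

lemma two_mul_sum_Icc_one_neg_one_pow (m : ℕ) :
    2 * ∑ j ∈ Icc 1 m, (-1 : R) ^ j = (-1) ^ m - 1 := by
  rw [show Icc 1 m = Ioc 0 m from Icc_add_one_left_eq_Ioc 0 m,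
    two_mul_sum_Ioc_neg_one_pow (Nat.zero_le m), pow_zero]

lemma sum_Ico_add_succ_eq (g : ℕ → R) {i N : ℕ} (hiN : i ≤ N) :
    ∑ k ∈ Ico i (N + 1), (g k + g (k + 1)) = g i + 2 * ∑ k ∈ Ioc i N, g k + g (N + 1) := by
  induction N, hiN using Nat.le_induction with
  | base => simp
  | succ N hiN ih =>
    rw [sum_Ico_succ_top (by omega), ih, sum_Ioc_succ_top hiN]
    ring

lemma sum_mul_sum_Icc_eq (x y : ℕ → R) (N : ℕ) :
    (∑ i ∈ Icc 1 N, x i) * ∑ i ∈ Icc 1 N, y i =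
      ∑ i ∈ Icc 1 N, x i * y i + ∑ i ∈ Icc 1 N, ∑ k ∈ Ioc i N, (x i * y k + x k * y i) := by
  induction N with
  | zero => simp
  | succ N ih =>
    have hrow : ∀ i ∈ Icc 1 N, ∑ k ∈ Ioc i (N + 1), (x i * y k + x k * y i) =
        ∑ k ∈ Ioc i N, (x i * y k + x k * y i) + (x i * y (N + 1) + x (N + 1) * y i) :=
      fun i hi => sum_Ioc_succ_top (mem_Icc.1 hi).2 _
    rw [sum_Icc_succ_top (by omega), sum_Icc_succ_top (by omega), sum_Icc_succ_top (by omega),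
      sum_Icc_succ_top (by omega), sum_congr rfl hrow, Ioc_self, sum_empty, sum_add_distrib,
      sum_add_distrib, ← sum_mul, ← mul_sum, add_mul, mul_add, mul_add, ih]
    ring

lemma sum_sum_Ioc_mul_add_eq_neg_sum {ε : ℕ → R} (a : ℕ → R) {N : ℕ} (hsq : ∀ i, ε i * ε i = 1)
    (hbal : ∑ i ∈ Icc 1 N, ε i = 0) :
    ∑ i ∈ Icc 1 N, ∑ k ∈ Ioc i N, ε i * ε k * a i +
      ∑ i ∈ Icc 1 N, ∑ k ∈ Ioc i N, ε i * ε k * a k = -∑ i ∈ Icc 1 N, a i := by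
  have h := sum_mul_sum_Icc_eq ε (fun i => ε i * a i) N
  rw [hbal, zero_mul] at h
  have hdiag : ∑ i ∈ Icc 1 N, ε i * (ε i * a i) = ∑ i ∈ Icc 1 N, a i :=
    sum_congr rfl fun i _ => by rw [← mul_assoc, hsq, one_mul]
  have hoff : ∑ i ∈ Icc 1 N, ∑ k ∈ Ioc i N, (ε i * (ε k * a k) + ε k * (ε i * a i)) =
      ∑ i ∈ Icc 1 N, ∑ k ∈ Ioc i N, ε i * ε k * a i +
        ∑ i ∈ Icc 1 N, ∑ k ∈ Ioc i N, ε i * ε k * a k := by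
    rw [← sum_add_distrib]
    refine sum_congr rfl fun i _ => ?_
    rw [← sum_add_distrib]
    exact sum_congr rfl fun k _ => by ring
  linear_combination -h - hdiag - hoff

lemma sum_Icc_neg_one_pow_two_mul (n : ℕ) : ∑ i ∈ Icc 1 (2 * n), (-1 : R) ^ i = 0 := by
  induction n with
  | zero => simp
  | succ n ih =>
    rw [mul_add_one, sum_Icc_succ_top (by omega), sum_Icc_succ_top (by omega), ih, pow_succ,
      pow_succ]
    ring

lemma two_mul_ite_even (m : ℕ) (x : R) :
    2 * (if Even m then x else 0) = ((-1) ^ m + 1) * x := by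
  rcases Nat.even_or_odd m with hm | hm
  · rw [if_pos hm, hm.neg_one_pow]; ring
  · rw [if_neg (Nat.not_even_iff_odd.2 hm), hm.neg_one_pow]; ring

end Alternating

lemma IsDomino.finsum_mem_neg_one_pow_eq_zero {d : Set (ℕ × ℕ)} (hd : IsDomino d) :
    ∑ᶠ p ∈ d, (-1 : ℤ) ^ (p.1 + p.2) = 0 := by
  obtain ⟨i, j, rfl | rfl⟩ := hd
  · rw [finsum_mem_pair (by simp), ← add_assoc, pow_succ]; ring
  · rw [finsum_mem_pair (by simp), add_right_comm, pow_succ]; ring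

lemma finsum_mem_cellsFn_neg_one_pow_eq_zero {f : ℕ → ℕ} (ht : HasDominoTiling f)
    (hfin : (cellsFn f).Finite) : ∑ᶠ p ∈ cellsFn f, (-1 : ℤ) ^ (p.1 + p.2) = 0 := by
  obtain ⟨D, hD, hdisj, hcover⟩ := ht
  rw [← hcover] at hfin ⊢
  have hsub : ∀ d ∈ D, d ⊆ ⋃₀ D := fun d hd => Set.subset_sUnion_of_mem hd
  rw [finsum_mem_sUnion hdisj (hfin.finite_subsets.subset hsub) fun d hd => hfin.subset (hsub d hd)]
  exact finsum_mem_eq_zero_of_forall_eq_zero fun d hd => (hD d hd).finsum_mem_neg_one_pow_eq_zero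

namespace OneIdxPartition

variable (μ : OneIdxPartition) {N : ℕ}

lemma part_eq_zero_of_lt (hN : μ.part (N + 1) = 0) {i : ℕ} (hi : N < i) : μ.part i = 0 :=
  Nat.eq_zero_of_le_zero (hN ▸ μ.antitone (Nat.succ_pos N) hi)

lemma part_eq_zero_of_notMem_Icc (hN : μ.part (N + 1) = 0) {i : ℕ} (hi : i ∉ Icc 1 N) :
    μ.part i = 0 := by
  rcases Nat.eq_zero_or_pos i with rfl | hpos
  · exact μ.part_zero
  · simp only [mem_Icc, not_and, not_le] at hi
    exact μ.part_eq_zero_of_lt hN (hi hpos)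

lemma mem_cellsFn_iff (hN : μ.part (N + 1) = 0) {p : ℕ × ℕ} :
    p ∈ cellsFn μ.part ↔ p.1 ∈ Icc 1 N ∧ p.2 ∈ Icc 1 (μ.part p.1) := by
  refine ⟨fun ⟨h1, h2, h3⟩ => ⟨mem_Icc.2 ⟨h1, ?_⟩, mem_Icc.2 ⟨h2, h3⟩⟩,
    fun ⟨h1, h2⟩ => ⟨(mem_Icc.1 h1).1, mem_Icc.1 h2⟩⟩
  by_contra hlt
  rw [μ.part_eq_zero_of_lt hN (not_le.1 hlt)] at h3
  omega

lemma finite_cellsFn : (cellsFn μ.part).Finite := by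
  obtain ⟨N, hN⟩ := μ.finite
  refine (Icc 1 N ×ˢ Icc 1 (μ.part 1) : Finset (ℕ × ℕ)).finite_toSet.subset fun p hp => ?_
  obtain ⟨h1, h2⟩ := (μ.mem_cellsFn_iff (hN (N + 1) (by omega))).1 hp
  exact mem_product.2 ⟨Icc_subset_Icc_right (by omega) h1,
    Icc_subset_Icc_right (μ.antitone le_rfl (mem_Icc.1 h1).1) h2⟩

lemma finsum_mem_cellsFn {M : Type*} [AddCommMonoid M] (hN : μ.part (N + 1) = 0)
    (w : ℕ × ℕ → M) :
    ∑ᶠ p ∈ cellsFn μ.part, w p = ∑ i ∈ Icc 1 N, ∑ j ∈ Icc 1 (μ.part i), w (i, j) := by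
  rw [finsum_mem_eq_finite_toFinset_sum _ μ.finite_cellsFn]
  exact sum_finset_product _ _ _ fun p => by rw [Set.Finite.mem_toFinset, μ.mem_cellsFn_iff hN]

lemma sum_neg_one_pow_part_add_eq_of_hasDominoTiling (hN : μ.part (N + 1) = 0)
    (ht : HasDominoTiling μ.part) :
    ∑ i ∈ Icc 1 N, (-1 : ℤ) ^ (μ.part i + i) = ∑ i ∈ Icc 1 N, (-1 : ℤ) ^ i := by
  have hrow : ∀ i, 2 * ∑ j ∈ Icc 1 (μ.part i), (-1 : ℤ) ^ (i + j) =
      (-1) ^ (μ.part i + i) - (-1) ^ i := fun i => by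
    simp only [pow_add, ← mul_sum]
    rw [mul_left_comm, two_mul_sum_Icc_one_neg_one_pow]
    ring
  have h := finsum_mem_cellsFn_neg_one_pow_eq_zero ht μ.finite_cellsFn
  rw [μ.finsum_mem_cellsFn hN] at h
  rw [← sub_eq_zero, ← sum_sub_distrib, ← sum_congr rfl fun i _ => hrow i, ← mul_sum, h,
    mul_zero]

lemma conjFn_part_eq {k j : ℕ} (hj : j ∈ Ioc (μ.part (k + 1)) (μ.part k)) :
    conjFn μ.part j = k := by
  rw [mem_Ioc] at hj
  have hrows : {i : ℕ | 1 ≤ i ∧ j ≤ μ.part i} = ↑(Icc 1 k) := by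
    ext i
    simp only [Set.mem_ofPred_eq, coe_Icc, Set.mem_Icc, and_congr_right_iff]
    refine fun hi => ⟨fun hji => ?_, fun hik => hj.2.trans (μ.antitone hi hik)⟩
    by_contra hki
    have := μ.antitone (Nat.le_add_left 1 k) (not_le.1 hki)
    omega
  rw [conjFn, hrows, Set.ncard_coe_finset, Nat.card_Icc, Nat.add_sub_cancel]

lemma two_mul_sum_Ioc_conjFn_sign {i m : ℕ} (hi : 1 ≤ i) (him : i ≤ m) :
    2 * ∑ j ∈ Ioc (μ.part m) (μ.part i), (-1 : ℤ) ^ (conjFn μ.part j + j) =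
      ∑ k ∈ Ico i m, ((-1) ^ (μ.part k + k) + (-1) ^ (μ.part (k + 1) + (k + 1))) := by
  induction m, him using Nat.le_induction with
  | base => simp
  | succ m him ih =>
    have hblock : ∑ j ∈ Ioc (μ.part (m + 1)) (μ.part m), (-1 : ℤ) ^ (conjFn μ.part j + j) =
        (-1) ^ m * ∑ j ∈ Ioc (μ.part (m + 1)) (μ.part m), (-1 : ℤ) ^ j := by
      rw [mul_sum]
      exact sum_congr rfl fun j hj => by rw [μ.conjFn_part_eq hj, pow_add]
    have hstep : μ.part (m + 1) ≤ μ.part m := μ.antitone (hi.trans him) m.le_succ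
    rw [← sum_Ioc_consecutive _ hstep (μ.antitone hi him), mul_add, ih, hblock, mul_left_comm,
      two_mul_sum_Ioc_neg_one_pow hstep, sum_Ico_succ_top him]
    ring

lemma two_mul_sum_Icc_conjFn_sign (hN : μ.part (N + 1) = 0) {i : ℕ} (hi : i ∈ Icc 1 N) :
    2 * ∑ j ∈ Icc 1 (μ.part i), (-1 : ℤ) ^ (conjFn μ.part j + j) =
      (-1) ^ (μ.part i + i) + 2 * ∑ k ∈ Ioc i N, (-1) ^ (μ.part k + k) + (-1) ^ (N + 1) := by
  rw [mem_Icc] at hi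
  have h := μ.two_mul_sum_Ioc_conjFn_sign hi.1 (show i ≤ N + 1 by omega)
  rw [hN, ← Icc_add_one_left_eq_Ioc, zero_add,
    sum_Ico_add_succ_eq (fun k => (-1 : ℤ) ^ (μ.part k + k)) hi.2, hN, zero_add] at h
  exact h

lemma bFn_eq_sum_Icc (hN : μ.part (N + 1) = 0) :
    bFn μ.part = ∑ i ∈ Icc 1 N, ∑ j ∈ Icc 1 (μ.part i),
      (-1 : ℤ) ^ (μ.part i + conjFn μ.part j + i + j + 1) * ((μ.part i : ℤ) - i) := by
  refine finsum_eq_finsetSum_of_support_subset _ fun i hi => ?_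
  by_contra hiN
  rw [Function.mem_support, μ.part_eq_zero_of_notMem_Icc hN hiN] at hi
  simp at hi

lemma two_mul_bFn_eq (hN : μ.part (N + 1) = 0) (hNeven : Even N) :
    2 * bFn μ.part =
      ∑ i ∈ Icc 1 N, ((-1) ^ (μ.part i + i) - 1) * ((μ.part i : ℤ) - i) -
        2 * ∑ i ∈ Icc 1 N, ∑ k ∈ Ioc i N,
          (-1) ^ (μ.part i + i) * (-1) ^ (μ.part k + k) * ((μ.part i : ℤ) - i) := by
  rw [μ.bFn_eq_sum_Icc hN, mul_sum, mul_sum, ← sum_sub_distrib]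
  refine sum_congr rfl fun i hi => ?_
  have hrow : ∑ j ∈ Icc 1 (μ.part i),
      (-1 : ℤ) ^ (μ.part i + conjFn μ.part j + i + j + 1) * ((μ.part i : ℤ) - i) =
        -((-1) ^ (μ.part i + i) * ((μ.part i : ℤ) - i)) *
          ∑ j ∈ Icc 1 (μ.part i), (-1 : ℤ) ^ (conjFn μ.part j + j) := by
    rw [mul_sum]
    refine sum_congr rfl fun j _ => ?_
    rw [show μ.part i + conjFn μ.part j + i + j + 1 = (μ.part i + i) + (conjFn μ.part j + j) + 1
      by ring, pow_succ, pow_add]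
    ring
  have hpull : ∑ k ∈ Ioc i N, (-1) ^ (μ.part i + i) * (-1) ^ (μ.part k + k) * ((μ.part i : ℤ) - i) =
      (-1) ^ (μ.part i + i) * ((μ.part i : ℤ) - i) * ∑ k ∈ Ioc i N, (-1) ^ (μ.part k + k) := by
    rw [mul_sum]
    exact sum_congr rfl fun k _ => by ring
  rw [hrow, mul_left_comm, μ.two_mul_sum_Icc_conjFn_sign hN hi, hNeven.add_one.neg_one_pow, hpull]
  linear_combination (-((μ.part i : ℤ) - i)) * (pow_mul_pow_eq_one (μ.part i + i) (by norm_num) :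
    (-1 : ℤ) ^ (μ.part i + i) * (-1) ^ (μ.part i + i) = 1)

end OneIdxPartition

theorem b_eq_even_diag_sum_general (n : ℕ) (μ : OneIdxPartition)
    (hlen : μ.part (2 * n + 1) = 0) (ht : HasDominoTiling μ.part) :
    bFn μ.part =
      (∑ i ∈ Finset.Icc 1 (2 * n),
        if Even (μ.part i + i) then (μ.part i : ℤ) - (i : ℤ) else 0)
      + ∑ i ∈ Finset.Icc 1 (2 * n), ∑ j ∈ Finset.Ioc i (2 * n),
          (-1 : ℤ) ^ (μ.part i + μ.part j + i + j) * ((μ.part j : ℤ) - (j : ℤ)) := by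
  have hbal : ∑ i ∈ Icc 1 (2 * n), (-1 : ℤ) ^ (μ.part i + i) = 0 := by
    rw [μ.sum_neg_one_pow_part_add_eq_of_hasDominoTiling hlen ht, sum_Icc_neg_one_pow_two_mul]
  have hpair := sum_sum_Ioc_mul_add_eq_neg_sum (fun i => (μ.part i : ℤ) - i)
    (fun i => pow_mul_pow_eq_one _ (by norm_num)) hbal
  have hdiag : 2 * ∑ i ∈ Icc 1 (2 * n), (if Even (μ.part i + i) then (μ.part i : ℤ) - i else 0) =
      ∑ i ∈ Icc 1 (2 * n), ((-1) ^ (μ.part i + i) + 1) * ((μ.part i : ℤ) - i) := by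
    rw [mul_sum]
    exact sum_congr rfl fun i _ => two_mul_ite_even _ _
  have hoff : ∑ i ∈ Icc 1 (2 * n), ∑ j ∈ Ioc i (2 * n),
      (-1 : ℤ) ^ (μ.part i + μ.part j + i + j) * ((μ.part j : ℤ) - j) =
        ∑ i ∈ Icc 1 (2 * n), ∑ j ∈ Ioc i (2 * n),
          (-1) ^ (μ.part i + i) * (-1) ^ (μ.part j + j) * ((μ.part j : ℤ) - j) :=
    sum_congr rfl fun i _ => sum_congr rfl fun j _ => by
      rw [← pow_add, show μ.part i + i + (μ.part j + j) = μ.part i + μ.part j + i + j by ring]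
  apply mul_left_cancel₀ (two_ne_zero (α := ℤ))
  rw [mul_add, hdiag, hoff, μ.two_mul_bFn_eq hlen (even_two_mul n)]
  simp only [add_mul, sub_mul, one_mul, sum_add_distrib, sum_sub_distrib] at hpair ⊢
  linear_combination (-2) * hpair

/-- for `λ` with at most `2n` parts and empty 2-core,
`b(λ) = Σ_{1≤i≤2n, λ_i−i even} (λ_i−i) + Σ_{1≤i<j≤2n} (−1)^{λ_i−λ_j+j−i}(λ_j−j)`. -/
theorem b_eq_even_diag_sum (n : ℕ) (hn : 0 < n) (μ : OneIdxPartition)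
    (hlen : μ.part (2 * n + 1) = 0) (ht : HasDominoTiling μ.part) :
    bFn μ.part =
      (∑ i ∈ Finset.Icc 1 (2 * n),
        if Even (μ.part i + i) then (μ.part i : ℤ) - (i : ℤ) else 0)
      + ∑ i ∈ Finset.Icc 1 (2 * n), ∑ j ∈ Finset.Ioc i (2 * n),
          (-1 : ℤ) ^ (μ.part i + μ.part j + i + j) * ((μ.part j : ℤ) - (j : ℤ)) :=
  b_eq_even_diag_sum_general n μ hlen ht
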